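/- Let Φ₁ and Φ₂ be uniformly perturbed lattice processes with i.i.d. numbers of replicas per lattice cell given by nonnegative integer-valued random variables X₁ and X₂, both with mean 1, and replicated points placed i.i.d. uniformly in the Voronoi cell. If X₁ ≤_Lt X₂, then Φ₁ ≤_Lf Φ₂. -/

import Mathlib

open MeasureTheory ENNReal

/-- `exp (-t)` for extended-nonnegative `t`, with `exp (-∞) = 0`. -/
noncomputable def expNeg (t : ℝ≥0∞) : ℝ := if t = ∞ then 0 else Real.exp (-t.toReal)

/-- Laplace functional of a random measure `Φ` on `α` over `(Ω, P)`. -/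
noncomputable def LF {Ω α : Type*} [MeasurableSpace Ω] [MeasurableSpace α]
    (P : Measure Ω) (Φ : Ω → Measure α) (u : α → ℝ≥0∞) : ℝ :=
  ∫ ω, expNeg (∫⁻ x, u x ∂(Φ ω)) ∂P

/-- Laplace functional (LF) order. -/
def LFOrder {Ω₁ Ω₂ α : Type*} [MeasurableSpace Ω₁] [MeasurableSpace Ω₂] [MeasurableSpace α]
    (P₁ : Measure Ω₁) (Φ₁ : Ω₁ → Measure α)
    (P₂ : Measure Ω₂) (Φ₂ : Ω₂ → Measure α) : Prop :=
  ∀ u : α → ℝ≥0∞, Measurable u → LF P₁ Φ₁ u ≥ LF P₂ Φ₂ u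

/-- The lattice point `G v` for `v ∈ ℤ^d`, with generator matrix `G`. -/
noncomputable def latticePt {d : ℕ} (G : Matrix (Fin d) (Fin d) ℝ) (v : Fin d → ℤ) :
    EuclideanSpace ℝ (Fin d) :=
  (WithLp.equiv 2 (Fin d → ℝ)).symm (G.mulVec fun j => (v j : ℝ))

/-- The Voronoi cell of the lattice point `0` of the lattice generated by `G`. -/
def voronoiCell {d : ℕ} (G : Matrix (Fin d) (Fin d) ℝ) : Set (EuclideanSpace ℝ (Fin d)) :=
  {y | ∀ v : Fin d → ℤ, ‖y‖ ≤ ‖y - latticePt G v‖}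

/-!
Each factor of the product formula is the probability generating function `t ↦ E[t ^ X]`
evaluated at the cell average `q_v ∈ [0, 1]` of `e^{-u}`. On `(0, 1)` the generating function is
the Laplace transform at `s = -log t`, so the Laplace transform order gives the factorwise
inequality there, and continuity extends it to `[0, 1]`. Infinite products of factors in
`[0, 1]` are monotone, being limits of monotone finite products.
-/

lemma expNeg_nonneg (t : ℝ≥0∞) : 0 ≤ expNeg t := by
  unfold expNeg
  split <;> positivity

lemma expNeg_le_one (t : ℝ≥0∞) : expNeg t ≤ 1 := by
  unfold expNeg
  split
  · exact zero_le_one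
  · exact Real.exp_le_one_iff.mpr (neg_nonpos.mpr ENNReal.toReal_nonneg)

/-- Division by `μ.real s = 0` when `μ s = ∞` makes the claim hold in that case too. -/
lemma setIntegral_div_measureReal_mem_Icc {α : Type*} [MeasurableSpace α] {μ : Measure α}
    {s : Set α} {f : α → ℝ} (hf₀ : ∀ x, 0 ≤ f x) (hf₁ : ∀ x, f x ≤ 1) :
    (∫ x in s, f x ∂μ) / μ.real s ∈ Set.Icc 0 1 := by
  have hint : 0 ≤ ∫ x in s, f x ∂μ := integral_nonneg hf₀
  refine ⟨div_nonneg hint measureReal_nonneg, ?_⟩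
  rcases eq_top_or_lt_top (μ s) with hs | hs
  · simp [Measure.real, hs]
  · refine div_le_one_of_le₀ ?_ measureReal_nonneg
    have hnorm := norm_setIntegral_le_of_norm_le_const (μ := μ) (f := f) hs
      (C := 1) fun x _ => by rw [Real.norm_of_nonneg (hf₀ x)]; exact hf₁ x
    rw [Real.norm_of_nonneg hint, one_mul] at hnorm
    exact hnorm

lemma exp_neg_mul_neg_log {t : ℝ} (ht : 0 < t) (n : ℕ) :
    Real.exp (-(-Real.log t * n)) = t ^ n := by
  rw [neg_mul, neg_neg, mul_comm, Real.exp_nat_mul, Real.exp_log ht]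

section GeneratingFunction

variable {Ω : Type*} [MeasurableSpace Ω] {Q : Measure Ω} {X : Ω → ℕ}

lemma integral_pow_nonneg {t : ℝ} (ht : 0 ≤ t) : 0 ≤ ∫ ω, t ^ X ω ∂Q :=
  integral_nonneg fun _ => pow_nonneg ht _

lemma integral_pow_le_one [IsProbabilityMeasure Q] {t : ℝ} (ht : t ∈ Set.Icc 0 1) :
    ∫ ω, t ^ X ω ∂Q ≤ 1 := by
  have h := norm_integral_le_of_norm_le_const (μ := Q) (f := fun ω => t ^ X ω) (C := 1)
    (Filter.Eventually.of_forall fun ω => by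
      rw [Real.norm_of_nonneg (pow_nonneg ht.1 _)]; exact pow_le_one₀ ht.1 ht.2)
  simpa using (le_abs_self _).trans h

lemma continuousOn_integral_pow [IsFiniteMeasure Q] (hX : Measurable X) :
    ContinuousOn (fun t : ℝ => ∫ ω, t ^ X ω ∂Q) (Set.Icc 0 1) :=
  continuousOn_of_dominated (bound := fun _ => 1)
    (fun _ _ => (measurable_const.pow hX).aestronglyMeasurable)
    (fun t ht => Filter.Eventually.of_forall fun ω => by
      rw [Real.norm_of_nonneg (pow_nonneg ht.1 _)]; exact pow_le_one₀ ht.1 ht.2)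
    (integrable_const 1)
    (Filter.Eventually.of_forall fun ω => (continuous_pow (X ω)).continuousOn)

end GeneratingFunction

lemma integral_pow_le_of_laplace_le {Ω₁ Ω₂ : Type*} [MeasurableSpace Ω₁] [MeasurableSpace Ω₂]
    {Q₁ : Measure Ω₁} [IsFiniteMeasure Q₁] {Q₂ : Measure Ω₂} [IsFiniteMeasure Q₂]
    {X₁ : Ω₁ → ℕ} {X₂ : Ω₂ → ℕ} (hX₁ : Measurable X₁) (hX₂ : Measurable X₂)
    (hLt : ∀ s : ℝ, 0 < s →
      ∫ ω, Real.exp (-(s * X₁ ω)) ∂Q₁ ≥ ∫ ω, Real.exp (-(s * X₂ ω)) ∂Q₂)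
    {t : ℝ} (ht : t ∈ Set.Icc 0 1) :
    ∫ ω, t ^ X₂ ω ∂Q₂ ≤ ∫ ω, t ^ X₁ ω ∂Q₁ := by
  have hopen : ∀ t ∈ Set.Ioo (0 : ℝ) 1, ∫ ω, t ^ X₂ ω ∂Q₂ ≤ ∫ ω, t ^ X₁ ω ∂Q₁ := by
    intro t ⟨ht₀, ht₁⟩
    have h := hLt (-Real.log t) (neg_pos.mpr (Real.log_neg ht₀ ht₁))
    simpa only [exp_neg_mul_neg_log ht₀] using h
  have hcl : closure (Set.Ioo (0 : ℝ) 1) = Set.Icc 0 1 := closure_Ioo zero_ne_one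
  exact le_on_closure hopen (hcl ▸ continuousOn_integral_pow hX₂)
    (hcl ▸ continuousOn_integral_pow hX₁) (hcl ▸ ht)

section Products

variable {ι : Type*} {f g : ι → ℝ}

lemma multipliable_of_nonneg_of_le_one (hf₀ : ∀ i, 0 ≤ f i) (hf₁ : ∀ i, f i ≤ 1) :
    Multipliable f :=
  ⟨_, tendsto_atTop_ciInf (Finset.prod_anti_set_of_le_one hf₀ hf₁)
    ⟨0, by rintro _ ⟨s, rfl⟩; exact Finset.prod_nonneg fun i _ => hf₀ i⟩⟩

lemma tprod_le_tprod_of_nonneg_of_le_one (h : ∀ i, f i ≤ g i) (hf : ∀ i, 0 ≤ f i)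
    (hg : ∀ i, g i ≤ 1) : ∏' i, f i ≤ ∏' i, g i :=
  le_of_tendsto_of_tendsto'
    (multipliable_of_nonneg_of_le_one hf fun i => (h i).trans (hg i)).hasProd
    (multipliable_of_nonneg_of_le_one (fun i => (hf i).trans (h i)) hg).hasProd
    fun _ => Finset.prod_le_prod (fun i _ => hf i) fun i _ => h i

end Products

theorem perturbed_lattice_LF_order_general {d : ℕ}
    (G : Matrix (Fin d) (Fin d) ℝ)
    {Ω₁ Ω₂ Ω₁' Ω₂' : Type*} [MeasurableSpace Ω₁] [MeasurableSpace Ω₂]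
    [MeasurableSpace Ω₁'] [MeasurableSpace Ω₂']
    (Q₁ : Measure Ω₁) [IsProbabilityMeasure Q₁] (Q₂ : Measure Ω₂) [IsProbabilityMeasure Q₂]
    (P₁ : Measure Ω₁') (P₂ : Measure Ω₂')
    (X₁ : Ω₁ → ℕ) (X₂ : Ω₂ → ℕ) (hX₁m : Measurable X₁) (hX₂m : Measurable X₂)
    (Φ₁ : Ω₁' → Measure (EuclideanSpace ℝ (Fin d)))
    (Φ₂ : Ω₂' → Measure (EuclideanSpace ℝ (Fin d)))
    (hPL₁ : ∀ u : EuclideanSpace ℝ (Fin d) → ℝ≥0∞, Measurable u →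
      LF P₁ Φ₁ u = ∏' v : Fin d → ℤ,
        ∫ ω, ((∫ y in voronoiCell G, expNeg (u (y + latticePt G v)) ∂volume) /
          (volume (voronoiCell G)).toReal) ^ (X₁ ω) ∂Q₁)
    (hPL₂ : ∀ u : EuclideanSpace ℝ (Fin d) → ℝ≥0∞, Measurable u →
      LF P₂ Φ₂ u = ∏' v : Fin d → ℤ,
        ∫ ω, ((∫ y in voronoiCell G, expNeg (u (y + latticePt G v)) ∂volume) /
          (volume (voronoiCell G)).toReal) ^ (X₂ ω) ∂Q₂)
    (hLt : ∀ s : ℝ, 0 < s →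
      ∫ ω, Real.exp (-(s * X₁ ω)) ∂Q₁ ≥ ∫ ω, Real.exp (-(s * X₂ ω)) ∂Q₂) :
    LFOrder P₁ Φ₁ P₂ Φ₂ := by
  intro u hu
  rw [ge_iff_le, hPL₁ u hu, hPL₂ u hu]
  have hq : ∀ v : Fin d → ℤ,
      (∫ y in voronoiCell G, expNeg (u (y + latticePt G v)) ∂volume) /
        (volume (voronoiCell G)).toReal ∈ Set.Icc 0 1 :=
    fun v => setIntegral_div_measureReal_mem_Icc (fun _ => expNeg_nonneg _)
      (fun _ => expNeg_le_one _)
  exact tprod_le_tprod_of_nonneg_of_le_one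
    (fun v => integral_pow_le_of_laplace_le hX₁m hX₂m hLt (hq v))
    (fun v => integral_pow_nonneg (hq v).1) (fun v => integral_pow_le_one (hq v))

/-- For uniformly perturbed lattice processes `Φ₁, Φ₂` (lattice with
generator matrix `G`, `det G ≠ 0`; each site independently replicated an i.i.d.
number `Xᵢ` of times, mean `1`, points uniform in the translated Voronoi cell;
encoded by the factorized Laplace functional `L_Φ(u) = ∏_{v ∈ ℤ^d} G_X(q_v)`
with `q_v = (1/|V|) ∫_{V + Gv} e^{-u}`), `X₁ ≤_Lt X₂` implies `Φ₁ ≤_Lf Φ₂`. -/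
theorem perturbed_lattice_LF_order {d : ℕ}
    (G : Matrix (Fin d) (Fin d) ℝ) (hG : G.det ≠ 0)
    {Ω₁ Ω₂ Ω₁' Ω₂' : Type*} [MeasurableSpace Ω₁] [MeasurableSpace Ω₂]
    [MeasurableSpace Ω₁'] [MeasurableSpace Ω₂']
    (Q₁ : Measure Ω₁) [IsProbabilityMeasure Q₁] (Q₂ : Measure Ω₂) [IsProbabilityMeasure Q₂]
    (P₁ : Measure Ω₁') [IsProbabilityMeasure P₁] (P₂ : Measure Ω₂') [IsProbabilityMeasure P₂]
    (X₁ : Ω₁ → ℕ) (X₂ : Ω₂ → ℕ) (hX₁m : Measurable X₁) (hX₂m : Measurable X₂)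
    (hmean₁ : ∫ ω, (X₁ ω : ℝ) ∂Q₁ = 1) (hmean₂ : ∫ ω, (X₂ ω : ℝ) ∂Q₂ = 1)
    (Φ₁ : Ω₁' → Measure (EuclideanSpace ℝ (Fin d)))
    (Φ₂ : Ω₂' → Measure (EuclideanSpace ℝ (Fin d)))
    (hPL₁ : ∀ u : EuclideanSpace ℝ (Fin d) → ℝ≥0∞, Measurable u →
      LF P₁ Φ₁ u = ∏' v : Fin d → ℤ,
        ∫ ω, ((∫ y in voronoiCell G, expNeg (u (y + latticePt G v)) ∂volume) /
          (volume (voronoiCell G)).toReal) ^ (X₁ ω) ∂Q₁)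
    (hPL₂ : ∀ u : EuclideanSpace ℝ (Fin d) → ℝ≥0∞, Measurable u →
      LF P₂ Φ₂ u = ∏' v : Fin d → ℤ,
        ∫ ω, ((∫ y in voronoiCell G, expNeg (u (y + latticePt G v)) ∂volume) /
          (volume (voronoiCell G)).toReal) ^ (X₂ ω) ∂Q₂)
    (hLt : ∀ s : ℝ, 0 < s →
      ∫ ω, Real.exp (-(s * X₁ ω)) ∂Q₁ ≥ ∫ ω, Real.exp (-(s * X₂ ω)) ∂Q₂) :
    LFOrder P₁ Φ₁ P₂ Φ₂ :=
  perturbed_lattice_LF_order_general G Q₁ Q₂ P₁ P₂ X₁ X₂ hX₁m hX₂m Φ₁ Φ₂ hPL₁ hPL₂ hLt
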